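/- arXiv:1411.5739 — 2 statements merged into one kernel-verified Lean document; each statement's English description precedes it below -/
import Mathlib

section
/- (PolyOn guarantee) For every n >= 2 there exists a function A : ℕ -> List (Finset (Fin n)) -> ℕ (a deterministic online algorithm that is given F_min in advance) such that for every finite sequence S of subsets of Fin n with F_min(S) = F, setting l = floor(F / ln(n * ln n)), if l >= 1 then T(A(F), S) >= l - l/ln n; i.e., the online allocation produces at least l*(1 - 1/ln n) bins whose union equals Fin n. -/
/-! Greedy allocation with a potential. Use `l` bins, and let an element seen `c` times that is
still missing from a bin contribute `(1 - 1/l) ^ (F - c)`. Each arriving subset goes to the bin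
where the weight it newly covers is largest. There that weight disappears; in each of the other
`l - 1` bins the weight of the subset's elements grows by the factor `1 / (1 - 1/l)`; since the
chosen bin carries at least a `1/l` share, the potential never increases. It starts at
`l n (1 - 1/l) ^ F ≤ l n e^(-F/l) ≤ l / ln n`, and at the end every missing (bin, element) pair
contributes `1`, so at most `l / ln n` bins are incomplete. -/

/-- Frequency of element `i` in the sequence of subsets `S`. -/
def freqL {U : Type*} [DecidableEq U] (S : List (Finset U)) (i : U) : ℕ :=
  S.countP fun s => decide (i ∈ s)

/-- The minimum frequency `F_min(S)` of an element of the universe. -/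
noncomputable def FminL {U : Type*} [Fintype U] [DecidableEq U]
    (S : List (Finset U)) : ℕ :=
  sInf (Set.range fun i : U => freqL S i)

/-- The union of the subsets assigned to bin `b` by the online algorithm `A` on the
arrival sequence `S`: the `j`-th subset is irrevocably assigned to bin
`A [S_1, …, S_j]` (the value of `A` on the prefix ending at `S_j`). -/
def binUnion {U : Type*} [DecidableEq U] (A : List (Finset U) → ℕ)
    (S : List (Finset U)) (b : ℕ) : Finset U :=
  (Finset.range S.length).sup fun j =>
    if A (S.take (j + 1)) = b then S.getD j ∅ else ∅

/-- `T(A, S)`: the number of bins whose assigned subsets have union the whole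
universe, for the online algorithm `A` on the arrival sequence `S`. -/
def TonlineU {U : Type*} [Fintype U] [DecidableEq U] (A : List (Finset U) → ℕ)
    (S : List (Finset U)) : ℕ :=
  (((Finset.range S.length).image fun j => A (S.take (j + 1))).filter
    fun b => binUnion A S b = Finset.univ).card

open Finset Real

lemma Finset.sum_erase_le_one_sub_one_div_card_mul {ι 𝕜 : Type*} [DecidableEq ι] [Field 𝕜]
    [LinearOrder 𝕜] [IsStrictOrderedRing 𝕜] {s : Finset ι} {f : ι → 𝕜} {a : ι}
    (ha : a ∈ s) (hmax : ∀ b ∈ s, f b ≤ f a) :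
    ∑ b ∈ s.erase a, f b ≤ (1 - 1 / #s) * ∑ b ∈ s, f b := by
  have hcard : (0 : 𝕜) < #s := by exact_mod_cast card_pos.mpr ⟨a, ha⟩
  have hsum : ∑ b ∈ s, f b ≤ #s * f a := by
    simpa [nsmul_eq_mul] using sum_le_card_nsmul s f (f a) hmax
  have havg : (∑ b ∈ s, f b) / #s ≤ f a := (div_le_iff₀' hcard).mpr hsum
  calc ∑ b ∈ s.erase a, f b = ∑ b ∈ s, f b - f a := by rw [← add_sum_erase s f ha]; ring
    _ ≤ ∑ b ∈ s, f b - (∑ b ∈ s, f b) / #s := by linarith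
    _ = (1 - 1 / #s) * ∑ b ∈ s, f b := by ring

lemma Finset.sum_compl_eq_sum_sdiff_add_sum_compl_union {U M : Type*} [Fintype U]
    [DecidableEq U] [AddCommMonoid M] (C T : Finset U) (f : U → M) :
    ∑ i ∈ univ \ C, f i = ∑ i ∈ T \ C, f i + ∑ i ∈ univ \ (C ∪ T), f i := by
  rw [← sum_union (disjoint_left.mpr fun i hT hCT => by simp_all)]
  congr 1
  ext i
  simp only [mem_sdiff, mem_univ, true_and, mem_union]
  tauto

lemma one_lt_mul_log {x : ℝ} (hx : 2 ≤ x) : 1 < x * log x := by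
  have h2 : log 2 ≤ log x := log_le_log (by norm_num) hx
  nlinarith [log_two_gt_d9]

lemma one_sub_one_div_pow_le_exp (l F : ℕ) : (1 - 1 / (l : ℝ)) ^ F ≤ exp (-(F / l)) := by
  calc (1 - 1 / (l : ℝ)) ^ F ≤ exp (-(1 / l)) ^ F := by
        gcongr
        · simpa [one_div] using Nat.cast_inv_le_one (α := ℝ) l
        · linarith [add_one_le_exp (-(1 / (l : ℝ)))]
    _ = exp (-(F / l)) := by rw [← exp_nat_mul]; ring_nf

lemma FminL_le_freqL {U : Type*} [Fintype U] [DecidableEq U] (S : List (Finset U)) (i : U) :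
    FminL S ≤ freqL S i :=
  Nat.sInf_le ⟨i, rfl⟩

lemma binUnion_append_singleton {U : Type*} [DecidableEq U] (A : List (Finset U) → ℕ)
    (P : List (Finset U)) (T : Finset U) (b : ℕ) :
    binUnion A (P ++ [T]) b = (if A (P ++ [T]) = b then T else ∅) ∪ binUnion A P b := by
  unfold binUnion
  rw [List.length_append, List.length_singleton, range_add_one, sup_insert,
    List.take_of_length_le (by simp)]
  congr 1
  · simp
  · refine sup_congr rfl fun j hj => ?_
    rw [mem_range] at hj
    rw [List.take_append_of_le_length (by omega)]
    simp [List.getD, List.getElem?_append_left hj]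

lemma mem_image_of_binUnion_nonempty {U : Type*} [DecidableEq U] {A : List (Finset U) → ℕ}
    {S : List (Finset U)} {b : ℕ} (h : (binUnion A S b).Nonempty) :
    b ∈ (range S.length).image fun j => A (S.take (j + 1)) := by
  obtain ⟨x, hx⟩ := h
  obtain ⟨j, hj, hxj⟩ := mem_sup.mp hx
  split_ifs at hxj with hb
  · exact mem_image.mpr ⟨j, hj, hb⟩
  · simp at hxj

namespace GreedyCover

variable {U : Type*} [DecidableEq U]

structure State (U : Type*) where
  cover : ℕ → Finset U
  count : U → ℕ

/-- The subtraction truncates: an element seen at least `F` times weighs `1`. -/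
noncomputable def weight (l F c : ℕ) : ℝ :=
  (1 - 1 / (l : ℝ)) ^ (F - c)

noncomputable def gain (l F : ℕ) (σ : State U) (T : Finset U) (b : ℕ) : ℝ :=
  ∑ i ∈ T \ σ.cover b, weight l F (σ.count i)

noncomputable def bestBin (l F : ℕ) (σ : State U) (T : Finset U) : ℕ :=
  if h : (range l).Nonempty then ((range l).exists_max_image (gain l F σ T) h).choose else 0

noncomputable def State.step (l F : ℕ) (σ : State U) (T : Finset U) : State U where
  cover b := if b = bestBin l F σ T then σ.cover b ∪ T else σ.cover b
  count i := σ.count i + if i ∈ T then 1 else 0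

noncomputable def run (l F : ℕ) (P : List (Finset U)) : State U :=
  P.foldl (State.step l F) ⟨fun _ => ∅, fun _ => 0⟩

noncomputable def greedy (l F : ℕ) (P : List (Finset U)) : ℕ :=
  bestBin l F (run l F P.dropLast) (P.getLast?.getD ∅)

noncomputable def potential [Fintype U] (l F : ℕ) (σ : State U) : ℝ :=
  ∑ b ∈ range l, ∑ i ∈ univ \ σ.cover b, weight l F (σ.count i)

variable {l F : ℕ}

lemma weight_nonneg (c : ℕ) : 0 ≤ weight l F c :=
  pow_nonneg (by simpa [one_div] using Nat.cast_inv_le_one (α := ℝ) l) _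

lemma weight_of_le {c : ℕ} (h : F ≤ c) : weight l F c = 1 := by
  rw [weight, Nat.sub_eq_zero_of_le h, pow_zero]

lemma mul_weight_succ_le (c : ℕ) : (1 - 1 / (l : ℝ)) * weight l F (c + 1) ≤ weight l F c := by
  unfold weight
  rcases le_or_gt F c with h | h
  · rw [Nat.sub_eq_zero_of_le h, Nat.sub_eq_zero_of_le (by omega)]
    simp
  · rw [show F - c = F - (c + 1) + 1 by omega, pow_succ']

lemma gain_nonneg (σ : State U) (T : Finset U) (b : ℕ) : 0 ≤ gain l F σ T b :=
  sum_nonneg fun _ _ => weight_nonneg _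

lemma bestBin_spec (hl : 0 < l) (σ : State U) (T : Finset U) :
    bestBin l F σ T ∈ range l ∧
      ∀ b ∈ range l, gain l F σ T b ≤ gain l F σ T (bestBin l F σ T) := by
  have h : (range l).Nonempty := nonempty_range_iff.mpr hl.ne'
  rw [bestBin, dif_pos h]
  exact ((range l).exists_max_image (gain l F σ T) h).choose_spec

lemma count_step_of_mem (σ : State U) {T : Finset U} {i : U} (hi : i ∈ T) :
    (σ.step l F T).count i = σ.count i + 1 := by
  simp [State.step, hi]

lemma count_step_of_not_mem (σ : State U) {T : Finset U} {i : U} (hi : i ∉ T) :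
    (σ.step l F T).count i = σ.count i := by
  simp [State.step, hi]

lemma sum_compl_cover_step [Fintype U] (σ : State U) (T : Finset U) (b : ℕ) :
    ∑ i ∈ univ \ (σ.step l F T).cover b, weight l F ((σ.step l F T).count i)
      = (if b = bestBin l F σ T then 0 else ∑ i ∈ T \ σ.cover b, weight l F (σ.count i + 1))
        + ∑ i ∈ univ \ (σ.cover b ∪ T), weight l F (σ.count i) := by
  have hrest : ∀ C : Finset U, ∑ i ∈ univ \ (C ∪ T), weight l F ((σ.step l F T).count i)
      = ∑ i ∈ univ \ (C ∪ T), weight l F (σ.count i) :=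
    fun C => sum_congr rfl fun i hi => by
      rw [count_step_of_not_mem σ (by simp only [mem_sdiff, mem_union] at hi; tauto)]
  rw [sum_compl_eq_sum_sdiff_add_sum_compl_union _ T]
  by_cases hb : b = bestBin l F σ T
  · have hcover : (σ.step l F T).cover b = σ.cover b ∪ T := if_pos hb
    rw [if_pos hb, hcover, sdiff_eq_empty_iff_subset.mpr subset_union_right, sum_empty,
      union_assoc, union_self, hrest]
  · have hcover : (σ.step l F T).cover b = σ.cover b := if_neg hb
    rw [if_neg hb, hcover, hrest]
    congr 1
    exact sum_congr rfl fun i hi => by rw [count_step_of_mem σ (mem_sdiff.mp hi).1]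

/-- Moving to the next count multiplies a weight by at most `1 / (1 - 1/l)`, and the chosen bin
carries at least a `1/l` share of the total gain, which exactly compensates. -/
lemma sum_erase_bestBin_le_sum_gain (hl : 0 < l) (σ : State U) (T : Finset U) :
    ∑ b ∈ (range l).erase (bestBin l F σ T),
        ∑ i ∈ T \ σ.cover b, weight l F (σ.count i + 1)
      ≤ ∑ b ∈ range l, gain l F σ T b := by
  obtain ⟨hbest, hmax⟩ := bestBin_spec (F := F) hl σ T
  rcases (Nat.one_le_iff_ne_zero.mpr hl.ne').eq_or_lt with rfl | hl
  · rw [show (range 1).erase (bestBin 1 F σ T) = ∅ by simp_all, sum_empty]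
    exact sum_nonneg fun b _ => gain_nonneg σ T b
  have hq : 0 < 1 - 1 / (l : ℝ) := by
    rw [sub_pos, div_lt_one (by positivity)]
    exact_mod_cast hl
  refine le_of_mul_le_mul_left ?_ hq
  calc (1 - 1 / (l : ℝ)) * ∑ b ∈ (range l).erase (bestBin l F σ T),
        ∑ i ∈ T \ σ.cover b, weight l F (σ.count i + 1)
      ≤ ∑ b ∈ (range l).erase (bestBin l F σ T), gain l F σ T b := by
        rw [mul_sum]
        gcongr with b
        rw [mul_sum]
        exact sum_le_sum fun i _ => mul_weight_succ_le _
    _ ≤ (1 - 1 / (l : ℝ)) * ∑ b ∈ range l, gain l F σ T b := by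
        simpa using sum_erase_le_one_sub_one_div_card_mul hbest hmax

lemma potential_step_le [Fintype U] (hl : 0 < l) (σ : State U) (T : Finset U) :
    potential l F (σ.step l F T) ≤ potential l F σ := by
  unfold potential
  simp_rw [sum_compl_cover_step, sum_compl_eq_sum_sdiff_add_sum_compl_union (σ.cover _) T]
  rw [sum_add_distrib, sum_add_distrib]
  gcongr ?_ + _
  rw [sum_ite, sum_const_zero, zero_add, filter_ne']
  exact sum_erase_bestBin_le_sum_gain hl σ T

lemma run_append_singleton (P : List (Finset U)) (T : Finset U) :
    run l F (P ++ [T]) = (run l F P).step l F T :=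
  List.foldl_concat _ _ _ _

lemma greedy_append_singleton (P : List (Finset U)) (T : Finset U) :
    greedy l F (P ++ [T]) = bestBin l F (run l F P) T := by
  simp [greedy]

lemma count_run (P : List (Finset U)) (i : U) : (run l F P).count i = freqL P i := by
  induction P using List.reverseRecOn with
  | nil => simp [run, freqL]
  | append_singleton P T ih =>
    rw [run_append_singleton]
    simp [State.step, ih, freqL, List.countP_append]

lemma binUnion_greedy (S : List (Finset U)) (b : ℕ) :
    binUnion (greedy l F) S b = (run l F S).cover b := by
  induction S using List.reverseRecOn with
  | nil => simp [binUnion, run]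
  | append_singleton P T ih =>
    rw [binUnion_append_singleton, run_append_singleton, greedy_append_singleton, ih]
    by_cases hb : b = bestBin l F (run l F P) T
    · simp [State.step, hb, union_comm]
    · simp [State.step, hb, Ne.symm hb]

lemma potential_run_le [Fintype U] (hl : 0 < l) (P : List (Finset U)) :
    potential l F (run l F P) ≤ l * Fintype.card U * (1 - 1 / (l : ℝ)) ^ F := by
  induction P using List.reverseRecOn with
  | nil => simp [potential, run, weight, mul_assoc]
  | append_singleton P T ih =>
    rw [run_append_singleton]
    exact (potential_step_le hl _ T).trans ih

lemma card_not_full_le_potential [Fintype U] (σ : State U) (hF : ∀ i, F ≤ σ.count i) :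
    (#{b ∈ range l | σ.cover b ≠ univ} : ℝ) ≤ potential l F σ := by
  rw [card_filter, Nat.cast_sum, potential]
  refine sum_le_sum fun b _ => ?_
  simp_rw [weight_of_le (hF _), sum_const, nsmul_one]
  split_ifs with hb
  · exact_mod_cast card_pos.mpr (sdiff_nonempty.mpr fun h => hb (univ_subset_iff.mp h))
  · exact_mod_cast Nat.zero_le _

lemma card_full_le_TonlineU [Fintype U] [Nonempty U] (S : List (Finset U)) :
    #{b ∈ range l | (run l F S).cover b = univ} ≤ TonlineU (greedy l F) S := by
  refine card_le_card fun b hb => ?_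
  rw [mem_filter, ← binUnion_greedy] at hb
  exact mem_filter.mpr ⟨mem_image_of_binUnion_nonempty (hb.2 ▸ univ_nonempty), hb.2⟩

theorem sub_le_TonlineU_greedy [Fintype U] [Nonempty U] (hl : 0 < l) (S : List (Finset U))
    (hF : ∀ i, F ≤ freqL S i) :
    (l : ℝ) - l * Fintype.card U * (1 - 1 / (l : ℝ)) ^ F ≤ TonlineU (greedy l F) S := by
  have hsplit : (#{b ∈ range l | (run l F S).cover b = univ} : ℝ)
      + #{b ∈ range l | (run l F S).cover b ≠ univ} = l := by
    exact_mod_cast (card_filter_add_card_filter_not _).trans (card_range l)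
  have hfull :
      (#{b ∈ range l | (run l F S).cover b = univ} : ℝ) ≤ TonlineU (greedy l F) S := by
    exact_mod_cast card_full_le_TonlineU S
  have hnot_full := (card_not_full_le_potential (run l F S) fun i => count_run S i ▸ hF i).trans
    (potential_run_le hl S)
  linarith

end GreedyCover

/-- (PolyOn guarantee) For every `n ≥ 2` there is a deterministic online algorithm
`A` (given `F_min` in advance) such that for every arrival sequence `S` of subsets
of `Fin n` with `F_min(S) = F`, setting `l = ⌊F / ln (n * ln n)⌋`, if `l ≥ 1` then
the online allocation produces at least `l - l / ln n` bins whose union is `Fin n`. -/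
theorem stmt5 (n : ℕ) (hn : 2 ≤ n) :
    ∃ A : ℕ → List (Finset (Fin n)) → ℕ,
      ∀ (S : List (Finset (Fin n))) (F l : ℕ),
        FminL S = F →
        l = ⌊(F : ℝ) / Real.log ((n : ℝ) * Real.log n)⌋₊ →
        1 ≤ l →
        (l : ℝ) - (l : ℝ) / Real.log n ≤ (TonlineU (A F) S : ℝ) := by
  refine ⟨fun F => GreedyCover.greedy ⌊(F : ℝ) / log (n * log n)⌋₊ F,
    fun S F l hF hl_eq hl => ?_⟩
  have : Nonempty (Fin n) := ⟨⟨0, by omega⟩⟩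
  have hnlog : 1 < (n : ℝ) * log n := one_lt_mul_log (by exact_mod_cast hn)
  have hlog : 0 < log (n : ℝ) := log_pos (by exact_mod_cast hn)
  have hfloor : (l : ℝ) ≤ F / log (n * log n) :=
    hl_eq ▸ Nat.floor_le (div_nonneg F.cast_nonneg (log_nonneg hnlog.le))
  have hpow : (1 - 1 / (l : ℝ)) ^ F ≤ ((n : ℝ) * log n)⁻¹ := calc
    (1 - 1 / (l : ℝ)) ^ F ≤ exp (-(F / l)) := one_sub_one_div_pow_le_exp l F
    _ ≤ exp (-log (n * log n)) := by
      gcongr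
      rwa [le_div_iff₀ (by positivity), mul_comm, ← le_div_iff₀ (log_pos hnlog)]
    _ = ((n : ℝ) * log n)⁻¹ := by rw [exp_neg, exp_log (by positivity)]
  beta_reduce
  rw [← hl_eq]
  calc (l : ℝ) - l / log n = l - l * n * ((n : ℝ) * log n)⁻¹ := by field_simp
    _ ≤ l - l * Fintype.card (Fin n) * (1 - 1 / (l : ℝ)) ^ F := by
      rw [Fintype.card_fin]; gcongr
    _ ≤ TonlineU (GreedyCover.greedy l F) S :=
      GreedyCover.sub_le_TonlineU_greedy hl S fun i => hF ▸ FminL_le_freqL S i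
end

section
/- (Theorem: Omega((ln n)^{1/3}) lower bound) There exists a constant C > 0 such that for every q >= 1 and every deterministic online algorithm A : List (Finset ((Fin q) -> Bool)) -> ℕ, there exists a finite sequence S of subsets of the universe U = (Fin q -> Bool) (of size n = 2^q) satisfying T_opt(S) >= floor(q/2) and T(A, S) <= C * q^(2/3). Consequently, since q = log_2 n, every online algorithm has competitive ratio Omega((ln n)^{1/3}). -/
/-- `T_opt(S)`: the maximum number of pairwise disjoint subfamilies of `S`
each of whose union is the whole universe. -/
noncomputable def ToptL {U : Type*} (S : List (Finset U)) : ℕ :=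
  sSup {k | ∃ C : Fin k → Finset (Fin S.length),
    (∀ a b, a ≠ b → Disjoint (C a) (C b)) ∧
    ∀ a, ∀ u : U, ∃ j ∈ C a, u ∈ S.get j}

/-!
The adversary first presents the `q` half cubes `{x | x i = true}`, which `A` must place
before seeing anything else. With `m = q / 2`, it then pairs coordinate `k < m` with
coordinate `m + π k` and presents the quarter cubes `{x | x k = false ∧ x (m + π k) = false}`.
The triples (two half cubes and the quarter cube of a pair) are `m` disjoint covers. Online,
a bin can only be completed if it received both half cubes of some pair, and for a cyclic
shift `π` chosen on average there are at most `2 √m` such bins: a bin receiving `α` left and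
`β` right half cubes is hit by at most `min m (α β) ≤ √m (α + β)` shifts.
-/

open Finset

theorem Nat.min_le_sqrt_mul_add (m x y : ℕ) : min m (x * y) ≤ Nat.sqrt m * (x + y) := by
  set r := Nat.sqrt m
  rcases le_or_gt x r with hx | hx
  · calc min m (x * y) ≤ x * y := min_le_right _ _
      _ ≤ r * (x + y) := Nat.mul_le_mul hx (Nat.le_add_left _ _)
  rcases le_or_gt y r with hy | hy
  · calc min m (x * y) ≤ y * x := (min_le_right _ _).trans (Nat.mul_comm x y).le
      _ ≤ r * (x + y) := Nat.mul_le_mul hy (Nat.le_add_right _ _)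
  · have hm : m < (r + 1) * (r + 1) := Nat.lt_succ_sqrt m
    calc min m (x * y) ≤ m := min_le_left _ _
      _ ≤ r * (r + 2) := by nlinarith
      _ ≤ r * (x + y) := Nat.mul_le_mul_left _ (by omega)

def collisionBins {ι β : Type*} [Fintype ι] [DecidableEq β] (f g : ι → β) : Finset β :=
  ({k | f k = g k} : Finset ι).image f

section Shift

variable {m : ℕ} {β : Type*} [DecidableEq β]

lemma card_shifts_colliding_at_le [NeZero m] (f g : Fin m → β) (t : β) :
    #({s | ∃ k, f k = t ∧ g (k + s) = t} : Finset (Fin m)) ≤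
      #({k | f k = t} : Finset (Fin m)) * #({j | g j = t} : Finset (Fin m)) := by
  rw [← card_product]
  refine le_trans (card_le_card fun s hs => ?_) (card_image_le (f := fun p => p.2 - p.1))
  obtain ⟨k, hk, hgk⟩ := (mem_filter.1 hs).2
  exact mem_image.2 ⟨(k, k + s), by simp [hk, hgk], add_sub_cancel_left k s⟩

lemma sum_card_collisionBins_shift_le [NeZero m] (f g : Fin m → β) :
    ∑ s : Fin m, #(collisionBins f fun k => g (k + s)) ≤ 2 * Nat.sqrt m * m := by
  set T := univ.image f
  have hsub : ∀ s : Fin m, collisionBins f (fun k => g (k + s)) ⊆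
      T.bipartiteAbove (fun s t => ∃ k, f k = t ∧ g (k + s) = t) s := by
    intro s t ht
    obtain ⟨k, hk, rfl⟩ := mem_image.1 ht
    exact mem_filter.2 ⟨mem_image_of_mem f (mem_univ k), k, rfl, ((mem_filter.1 hk).2).symm⟩
  have hf : ∑ t ∈ T, #({k | f k = t} : Finset (Fin m)) = m := by
    rw [← card_eq_sum_card_fiberwise (fun k _ => mem_image_of_mem f (mem_univ k)), card_univ,
      Fintype.card_fin]
  have hg : ∑ t ∈ T, #({j | g j = t} : Finset (Fin m)) ≤ m := by
    rw [sum_card_fiberwise_eq_card_filter]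
    exact (card_filter_le _ _).trans (by simp)
  calc ∑ s : Fin m, #(collisionBins f fun k => g (k + s))
      ≤ ∑ s : Fin m, #(T.bipartiteAbove (fun s t => ∃ k, f k = t ∧ g (k + s) = t) s) :=
        sum_le_sum fun s _ => card_le_card (hsub s)
    _ = ∑ t ∈ T, #({s | ∃ k, f k = t ∧ g (k + s) = t} : Finset (Fin m)) :=
        sum_card_bipartiteAbove_eq_sum_card_bipartiteBelow _
    _ ≤ ∑ t ∈ T, Nat.sqrt m *
          (#({k | f k = t} : Finset (Fin m)) + #({j | g j = t} : Finset (Fin m))) := by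
        refine sum_le_sum fun t _ => le_trans (le_min ?_ (card_shifts_colliding_at_le f g t))
          (Nat.min_le_sqrt_mul_add _ _ _)
        exact (card_filter_le _ _).trans (by simp)
    _ ≤ Nat.sqrt m * (m + m) := by
        rw [← mul_sum, sum_add_distrib, hf]
        exact Nat.mul_le_mul_left _ (Nat.add_le_add_left hg _)
    _ = 2 * Nat.sqrt m * m := by ring

lemma exists_perm_card_collisionBins_le (f g : Fin m → β) :
    ∃ π : Equiv.Perm (Fin m), #(collisionBins f (g ∘ π)) ≤ 2 * Nat.sqrt m := by
  rcases Nat.eq_zero_or_pos m with rfl | hm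
  · exact ⟨1, by simp [collisionBins]⟩
  have : NeZero m := ⟨hm.ne'⟩
  obtain ⟨s, -, hs⟩ := exists_le_of_sum_le (g := fun _ => 2 * Nat.sqrt m) univ_nonempty
    ((sum_card_collisionBins_shift_le f g).trans (by simp [mul_comm]))
  exact ⟨Equiv.addRight s, hs⟩

end Shift

section OnlineCover

variable {U : Type*} [DecidableEq U]

lemma mem_binUnion {A : List (Finset U) → ℕ} {S : List (Finset U)} {b : ℕ} {x : U} :
    x ∈ binUnion A S b ↔
      ∃ (j : ℕ) (hj : j < S.length), A (S.take (j + 1)) = b ∧ x ∈ S[j] := by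
  simp only [binUnion, mem_sup, mem_range]
  constructor
  · rintro ⟨j, hj, hx⟩
    split_ifs at hx with hA
    · exact ⟨j, hj, hA, by rwa [List.getD_eq_getElem _ _ hj] at hx⟩
    · simp at hx
  · rintro ⟨j, hj, hA, hx⟩
    exact ⟨j, hj, by rwa [if_pos hA, List.getD_eq_getElem _ _ hj]⟩

lemma TonlineU_le_card [Fintype U] (A : List (Finset U) → ℕ) (S : List (Finset U))
    {B : Finset ℕ} (hB : ∀ b, binUnion A S b = univ → b ∈ B) : TonlineU A S ≤ #B :=
  card_le_card fun b hb => hB b (mem_filter.1 hb).2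

omit [DecidableEq U] in
lemma le_ToptL [Nonempty U] {S : List (Finset U)} {k : ℕ} (C : Fin k → Finset (Fin S.length))
    (hdisj : ∀ a b, a ≠ b → Disjoint (C a) (C b))
    (hcov : ∀ a, ∀ u : U, ∃ j ∈ C a, u ∈ S.get j) :
    k ≤ ToptL S := by
  refine le_csSup ⟨S.length, ?_⟩ ⟨C, hdisj, hcov⟩
  rintro k' ⟨C', hdisj', hcov'⟩
  choose j hj using fun a => (hcov' a (Classical.arbitrary U)).imp fun _ h => h.1
  have hinj : Function.Injective j := fun a a' h => by
    by_contra hne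
    exact disjoint_left.1 (hdisj' a a' hne) (hj a) (h ▸ hj a')
  simpa using Fintype.card_le_of_injective j hinj

end OnlineCover

section Hypercube

variable {q m : ℕ}

def halfCube (i : Fin q) : Finset (Fin q → Bool) := {x | x i = true}

def quarterCube (i j : Fin q) : Finset (Fin q → Bool) := {x | x i = false ∧ x j = false}

def halfCubeBin (A : List (Finset (Fin q → Bool)) → ℕ) (i : Fin q) : ℕ :=
  A ((List.ofFn (halfCube (q := q))).take (i + 1))

def adversarySeq (l r : Fin m → Fin q) : List (Finset (Fin q → Bool)) :=
  List.ofFn halfCube ++ List.ofFn fun k => quarterCube (l k) (r k)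

variable (l r : Fin m → Fin q)

lemma length_adversarySeq : (adversarySeq l r).length = q + m := by
  simp [adversarySeq]

lemma getElem_adversarySeq_of_lt {j : ℕ} (hj : j < q) (h : j < (adversarySeq l r).length) :
    (adversarySeq l r)[j] = halfCube ⟨j, hj⟩ := by
  simp only [adversarySeq]
  rw [List.getElem_append_left (by simpa using hj), List.getElem_ofFn]

lemma getElem_adversarySeq_add (k : Fin m) (h : q + k < (adversarySeq l r).length) :
    (adversarySeq l r)[q + k] = quarterCube (l k) (r k) := by
  simp only [adversarySeq]
  rw [List.getElem_append_right (by simp), List.getElem_ofFn]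
  simp

lemma take_adversarySeq {j : ℕ} (hj : j < q) :
    (adversarySeq l r).take (j + 1) = (List.ofFn (halfCube (q := q))).take (j + 1) :=
  List.take_append_of_le_length (by simpa using hj)

/-- The point `x` with `x i = false` exactly when half cube `i` went to bin `b` avoids every half
cube in `b`, so a complete bin `b` holds a quarter cube whose two half cubes both went to `b`. -/
lemma TonlineU_adversarySeq_le (A : List (Finset (Fin q → Bool)) → ℕ) :
    TonlineU A (adversarySeq l r) ≤
      #(collisionBins (halfCubeBin A ∘ l) (halfCubeBin A ∘ r)) := by
  refine TonlineU_le_card A _ fun b hb => ?_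
  set x : Fin q → Bool := fun i => decide (halfCubeBin A i ≠ b)
  obtain ⟨j, hj, hAj, hxj⟩ := mem_binUnion.1 (hb ▸ mem_univ x)
  rw [length_adversarySeq] at hj
  rcases lt_or_ge j q with hjq | hjq
  · rw [getElem_adversarySeq_of_lt l r hjq] at hxj
    simp only [halfCube, mem_filter, mem_univ, true_and, x, decide_eq_true_eq] at hxj
    exact absurd (by rw [halfCubeBin, ← take_adversarySeq l r hjq, hAj]) hxj
  · obtain ⟨k, rfl⟩ := Nat.exists_eq_add_of_le hjq
    have hkm : k < m := by omega
    rw [getElem_adversarySeq_add l r ⟨k, hkm⟩] at hxj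
    simp only [quarterCube, mem_filter, mem_univ, true_and, x, decide_eq_false_iff_not,
      not_not] at hxj
    exact mem_image.2
      ⟨⟨k, hkm⟩, mem_filter.2 ⟨mem_univ _, hxj.1.trans hxj.2.symm⟩, hxj.1⟩

lemma le_ToptL_adversarySeq (hlr : Function.Injective (Sum.elim l r)) :
    m ≤ ToptL (adversarySeq l r) := by
  obtain ⟨hl, hr, hlr⟩ := Sum.elim_injective.1 hlr
  have hlen := length_adversarySeq l r
  refine le_ToptL (fun k => {j | (j : ℕ) = l k ∨ (j : ℕ) = r k ∨ (j : ℕ) = q + k}) ?_ ?_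
  · intro a a' hne
    refine disjoint_left.2 fun j hja hja' => ?_
    simp only [mem_filter, mem_univ, true_and] at hja hja'
    have := (l a).isLt; have := (r a).isLt; have := (l a').isLt; have := (r a').isLt
    rcases hja with h | h | h <;> rcases hja' with h' | h' | h' <;>
      first
        | omega
        | exact hne (hl (Fin.ext (by omega)))
        | exact hne (hr (Fin.ext (by omega)))
        | exact hlr a a' (Fin.ext (by omega))
        | exact hlr a' a (Fin.ext (by omega))
  · intro k u
    have hlt : ∀ i : Fin q, (i : ℕ) < (adversarySeq l r).length := fun i => by omega
    by_cases hul : u (l k) = true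
    · refine ⟨⟨l k, hlt _⟩, by simp, ?_⟩
      simp [getElem_adversarySeq_of_lt l r (l k).isLt, halfCube, hul]
    by_cases hur : u (r k) = true
    · refine ⟨⟨r k, hlt _⟩, by simp, ?_⟩
      simp [getElem_adversarySeq_of_lt l r (r k).isLt, halfCube, hur]
    · refine ⟨⟨q + k, by omega⟩, by simp, ?_⟩
      simp [getElem_adversarySeq_add l r k, quarterCube, hul, hur]

end Hypercube

lemma Nat.sqrt_le_rpow_two_thirds (n : ℕ) : (Nat.sqrt n : ℝ) ≤ (n : ℝ) ^ (2 / 3 : ℝ) := by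
  rcases Nat.eq_zero_or_pos n with rfl | hn
  · simp
  calc (Nat.sqrt n : ℝ) ≤ √(n : ℝ) := Real.nat_sqrt_le_real_sqrt
    _ = (n : ℝ) ^ (1 / 2 : ℝ) := Real.sqrt_eq_rpow _
    _ ≤ (n : ℝ) ^ (2 / 3 : ℝ) :=
      Real.rpow_le_rpow_of_exponent_le (by exact_mod_cast hn) (by norm_num)

/-- (Ω((ln n)^{1/3}) lower bound) There is a constant `C > 0` such that for every
`q ≥ 1` and every deterministic online algorithm `A` over the universe
`U = (Fin q → Bool)` (of size `n = 2^q`), there is an arrival sequence `S` of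
subsets of `U` with `T_opt(S) ≥ ⌊q/2⌋` and `T(A, S) ≤ C * q^(2/3)`.  Since
`q = log₂ n`, every online algorithm has competitive ratio `Ω((ln n)^{1/3})`. -/
theorem stmt14 : ∃ C : ℝ, 0 < C ∧
    ∀ q : ℕ, 1 ≤ q →
      ∀ A : List (Finset (Fin q → Bool)) → ℕ,
        ∃ S : List (Finset (Fin q → Bool)),
          q / 2 ≤ ToptL S ∧
          (TonlineU A S : ℝ) ≤ C * (q : ℝ) ^ ((2 : ℝ) / 3) := by
  refine ⟨2, two_pos, fun q _ A => ?_⟩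
  let e : Fin (q / 2) ⊕ Fin (q / 2) → Fin q := Fin.castLE (by omega) ∘ finSumFinEquiv
  have he : Function.Injective e := (Fin.castLE_injective _).comp finSumFinEquiv.injective
  obtain ⟨π, hπ⟩ := exists_perm_card_collisionBins_le (halfCubeBin A ∘ e ∘ Sum.inl)
    (halfCubeBin A ∘ e ∘ Sum.inr)
  refine ⟨adversarySeq (e ∘ Sum.inl) (e ∘ Sum.inr ∘ π), le_ToptL_adversarySeq _ _ ?_, ?_⟩
  · have hpair : Sum.elim (e ∘ Sum.inl) (e ∘ Sum.inr ∘ π) = e ∘ Sum.map id π := by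
      ext (k | k) <;> rfl
    rw [hpair]
    exact he.comp (Sum.map_injective.2 ⟨Function.injective_id, π.injective⟩)
  calc (TonlineU A (adversarySeq (e ∘ Sum.inl) (e ∘ Sum.inr ∘ π)) : ℝ)
      ≤ 2 * Nat.sqrt (q / 2) := by exact_mod_cast (TonlineU_adversarySeq_le _ _ A).trans hπ
    _ ≤ 2 * Nat.sqrt q := by gcongr; exact Nat.div_le_self _ _
    _ ≤ 2 * (q : ℝ) ^ ((2 : ℝ) / 3) := by gcongr; exact Nat.sqrt_le_rpow_two_thirds q
end
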